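/- arXiv:2104.11192 — 4 statements merged into one kernel-verified Lean document; each statement's English description precedes it below -/
import Mathlib

section
/- Let b : ℕ → {0,1}, define α(j) = ∑_{i=0}^{∞} b(j+i)/32^{i+1}, let g : ℕ → {0,1}, and define reals x₀ = α(0) and x_{j+1} = 32·x_j − g(j) for all j. If g(i) = b(i) for all i < j but g(j) ≠ b(j), then x_{j+1} = α(j+1) + (2·b(j) − 1); in particular x_{j+1} ∈ {α(j+1) − 1, α(j+1) + 1} and |x_{j+1}| ≥ 30/31. -/
/-- `alphaL b j = ∑_{i=0}^∞ b(j+i) / 32^(i+1)`. -/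
noncomputable def alphaL (b : ℕ → Fin 2) (j : ℕ) : ℝ :=
  ∑' i : ℕ, ((b (j + i) : ℕ) : ℝ) / 32 ^ (i + 1)

/-!
While the guesses `g` agree with the digits `b`, the recurrence `x (j+1) = 32 x j - g j` is the
digit-shift `32 α(j) = b(j) + α(j+1)`, so `x j = α(j)`. At the first wrong guess `g j = 1 - b j`,
hence `x (j+1) = α(j+1) + 2 b(j) - 1`; as `0 ≤ α ≤ ∑ 32^-(i+1) = 1/31`, this is `≤ -30/31` or `≥ 1`.
-/

lemma Fin.two_cast_le_one (d : Fin 2) : ((d : ℕ) : ℝ) ≤ 1 := by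
  exact_mod_cast Nat.lt_succ_iff.mp d.isLt

lemma Fin.two_cast_eq_one_sub_of_ne {d e : Fin 2} (h : d ≠ e) :
    ((d : ℕ) : ℝ) = 1 - ((e : ℕ) : ℝ) := by
  fin_cases d <;> fin_cases e <;> simp_all

lemma hasSum_one_div_32_pow_succ : HasSum (fun i : ℕ => (1 / 32 : ℝ) ^ (i + 1)) (1 / 31) := by
  have h := (hasSum_geometric_of_lt_one (r := (1 / 32 : ℝ)) (by norm_num) (by norm_num)).mul_right
    (1 / 32)
  norm_num at h ⊢
  simpa [pow_succ] using h

namespace alphaL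

variable (b : ℕ → Fin 2) (j : ℕ)

lemma term_le (i : ℕ) : ((b (j + i) : ℕ) : ℝ) / 32 ^ (i + 1) ≤ (1 / 32 : ℝ) ^ (i + 1) := by
  rw [div_pow, one_pow]
  gcongr
  exact Fin.two_cast_le_one _

lemma summable : Summable fun i : ℕ => ((b (j + i) : ℕ) : ℝ) / 32 ^ (i + 1) :=
  hasSum_one_div_32_pow_succ.summable.of_nonneg_of_le (fun _ => by positivity) (term_le b j)

lemma nonneg : 0 ≤ alphaL b j :=
  tsum_nonneg fun _ => by positivity

lemma le_one_div_31 : alphaL b j ≤ 1 / 31 :=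
  hasSum_le (term_le b j) (summable b j).hasSum hasSum_one_div_32_pow_succ

lemma thirtytwo_mul : 32 * alphaL b j = ((b j : ℕ) : ℝ) + alphaL b (j + 1) := by
  rw [alphaL, (summable b j).tsum_eq_zero_add, mul_add, ← tsum_mul_left, alphaL]
  congr 1
  · simp [mul_div_cancel₀]
  · refine tsum_congr fun i => ?_
    rw [add_right_comm j, add_assoc j, pow_succ]
    field_simp

end alphaL

lemma eq_alphaL_of_guesses_correct (b g : ℕ → Fin 2) (x : ℕ → ℝ)
    (hx0 : x 0 = alphaL b 0) (hx : ∀ j : ℕ, x (j + 1) = 32 * x j - ((g j : ℕ) : ℝ)) :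
    ∀ k, (∀ i < k, g i = b i) → x k = alphaL b k
  | 0, _ => hx0
  | k + 1, hc => by
    rw [hx k, eq_alphaL_of_guesses_correct b g x hx0 hx k fun i hi => hc i (by omega),
      hc k k.lt_succ_self, alphaL.thirtytwo_mul]
    ring

theorem first_wrong_guess (b g : ℕ → Fin 2) (x : ℕ → ℝ)
    (hx0 : x 0 = alphaL b 0)
    (hx : ∀ j : ℕ, x (j + 1) = 32 * x j - ((g j : ℕ) : ℝ))
    (j : ℕ) (hcorrect : ∀ i < j, g i = b i) (hwrong : g j ≠ b j) :
    x (j + 1) = alphaL b (j + 1) + (2 * ((b j : ℕ) : ℝ) - 1) ∧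
    (x (j + 1) = alphaL b (j + 1) - 1 ∨ x (j + 1) = alphaL b (j + 1) + 1) ∧
    |x (j + 1)| ≥ 30 / 31 := by
  have key : x (j + 1) = alphaL b (j + 1) + (2 * ((b j : ℕ) : ℝ) - 1) := by
    rw [hx j, eq_alphaL_of_guesses_correct b g x hx0 hx j hcorrect, alphaL.thirtytwo_mul,
      Fin.two_cast_eq_one_sub_of_ne hwrong]
    ring
  have h0 := alphaL.nonneg b (j + 1)
  have h1 := alphaL.le_one_div_31 b (j + 1)
  refine ⟨key, ?_⟩
  obtain hb | hb : (b j : ℕ) = 0 ∨ (b j : ℕ) = 1 := by omega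
  · rw [key, hb, abs_of_neg (by push_cast; linarith)]
    push_cast
    exact ⟨by left; ring, by linarith⟩
  · rw [key, hb, abs_of_pos (by push_cast; linarith)]
    push_cast
    exact ⟨by right; ring, by linarith⟩
end

section
/- Let b : ℕ → {0,1}, define α(j) = ∑_{i=0}^{∞} b(j+i)/32^{i+1}, let g : ℕ → {0,1}, and define reals x₀ = α(0) and x_{j+1} = 32·x_j − g(j) for all j. If there exists some j ≤ l with g(j) ≠ b(j), then |x_{l+1}| ≥ 30/31. -/
lemma geom_aux : Summable (fun i : ℕ => (1/32 : ℝ) ^ (i+1)) := by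
  have h : Summable (fun i : ℕ => (1/32 : ℝ) * (1/32) ^ i) :=
    (summable_geometric_of_lt_one (by norm_num) (by norm_num)).mul_left _
  exact h.congr (fun i => by rw [pow_succ]; ring)

lemma geom_sum_aux : ∑' i : ℕ, (1/32 : ℝ) ^ (i+1) = 1/31 := by
  have h : ∑' i : ℕ, (1/32 : ℝ) ^ (i+1) = ∑' i : ℕ, (1/32 : ℝ) * (1/32) ^ i :=
    tsum_congr (fun i => by rw [pow_succ]; ring)
  rw [h, tsum_mul_left, tsum_geometric_of_lt_one (by norm_num) (by norm_num)]
  norm_num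

lemma term_le (b : ℕ → Fin 2) (j i : ℕ) :
    ((b (j + i) : ℕ) : ℝ) / 32 ^ (i + 1) ≤ (1/32 : ℝ) ^ (i+1) := by
  have hb : ((b (j + i) : ℕ) : ℝ) ≤ 1 := by
    have := (b (j + i)).isLt
    exact_mod_cast Nat.lt_succ_iff.mp this
  rw [div_le_iff₀ (by positivity)]
  have h1 : (1/32 : ℝ)^(i+1) * 32^(i+1) = 1 := by
    rw [div_pow, one_pow]
    field_simp
  linarith

lemma alphaL_summable (b : ℕ → Fin 2) (j : ℕ) :
    Summable (fun i : ℕ => ((b (j + i) : ℕ) : ℝ) / 32 ^ (i + 1)) :=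
  Summable.of_nonneg_of_le (fun i => by positivity) (term_le b j) geom_aux

lemma alphaL_nonneg (b : ℕ → Fin 2) (j : ℕ) : 0 ≤ alphaL b j :=
  tsum_nonneg (fun i => by positivity)

lemma alphaL_le (b : ℕ → Fin 2) (j : ℕ) : alphaL b j ≤ 1/31 := by
  have h := Summable.tsum_le_tsum (term_le b j) (alphaL_summable b j) geom_aux
  calc alphaL b j ≤ ∑' i : ℕ, (1/32 : ℝ) ^ (i+1) := h
    _ = 1/31 := geom_sum_aux

lemma alphaL_rec (b : ℕ → Fin 2) (j : ℕ) :
    alphaL b j = ((b j : ℕ) : ℝ) / 32 + alphaL b (j+1) / 32 := by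
  unfold alphaL
  rw [Summable.tsum_eq_zero_add (alphaL_summable b j)]
  congr 1
  · norm_num
  · rw [eq_div_iff (by norm_num : (32:ℝ) ≠ 0), ← tsum_mul_right]
    congr 1
    ext i
    have : j + (i + 1) = j + 1 + i := by ring
    rw [this]
    field_simp
    ring

theorem any_wrong_guess_detected (b g : ℕ → Fin 2) (x : ℕ → ℝ)
    (hx0 : x 0 = alphaL b 0)
    (hx : ∀ j : ℕ, x (j + 1) = 32 * x j - ((g j : ℕ) : ℝ))
    (l : ℕ) (hwrong : ∃ j ≤ l, g j ≠ b j) :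
    |x (l + 1)| ≥ 30 / 31 := by
  classical
  -- minimal wrong index
  have hex : ∃ j, g j ≠ b j := by obtain ⟨j, _, hj⟩ := hwrong; exact ⟨j, hj⟩
  set j := Nat.find hex with hjdef
  have hjwrong : g j ≠ b j := Nat.find_spec hex
  have hjle : j ≤ l := by
    obtain ⟨k, hk, hkw⟩ := hwrong
    exact le_trans (Nat.find_min' hex hkw) hk
  -- before j, x agrees with alphaL
  have hxa : ∀ i ≤ j, x i = alphaL b i := by
    intro i hi
    induction i with
    | zero => exact hx0
    | succ n ih =>
      have hn : n ≤ j := Nat.le_of_succ_le hi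
      have hgn : g n = b n := by
        by_contra h
        have := Nat.find_min' hex h
        omega
      rw [hx n, ih hn, alphaL_rec b n, hgn]
      ring
  -- at step j+1
  have hxj : x j = alphaL b j := hxa j le_rfl
  have key : |x (j + 1)| ≥ 30 / 31 := by
    rw [hx j, hxj, alphaL_rec b j]
    have hα0 := alphaL_nonneg b (j+1)
    have hα1 := alphaL_le b (j+1)
    have hB : (b j : ℕ) < 2 := (b j).isLt
    have hG : (g j : ℕ) < 2 := (g j).isLt
    have hne : (g j : ℕ) ≠ (b j : ℕ) := fun h => hjwrong (Fin.ext h)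
    have hcases : ((b j : ℕ) = 1 ∧ (g j : ℕ) = 0) ∨ ((b j : ℕ) = 0 ∧ (g j : ℕ) = 1) := by
      omega
    rcases hcases with ⟨h1, h2⟩ | ⟨h1, h2⟩ <;> rw [h1, h2]
    · rw [abs_of_nonneg (by push_cast; linarith)]
      push_cast; linarith
    · rw [abs_of_nonpos (by push_cast; linarith)]
      push_cast; linarith
  -- propagate
  have prop : ∀ m, |x (j + 1 + m)| ≥ 30 / 31 := by
    intro m
    induction m with
    | zero => simpa using key
    | succ n ih =>
      have h1 : x (j + 1 + (n+1)) = 32 * x (j+1+n) - ((g (j+1+n) : ℕ) : ℝ) := by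
        exact hx (j+1+n)
      have hG : ((g (j+1+n) : ℕ) : ℝ) ≤ 1 := by
        have := (g (j+1+n)).isLt; exact_mod_cast Nat.lt_succ_iff.mp this
      have hG0 : (0:ℝ) ≤ ((g (j+1+n) : ℕ) : ℝ) := by positivity
      rw [h1]
      have h2 : |32 * x (j+1+n)| - |((g (j+1+n) : ℕ) : ℝ)| ≤ |32 * x (j+1+n) - ((g (j+1+n) : ℕ) : ℝ)| :=
        abs_sub_abs_le_abs_sub _ _
      have h3 : |32 * x (j+1+n)| = 32 * |x (j+1+n)| := by
        rw [abs_mul]; norm_num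
      have h4 : |((g (j+1+n) : ℕ) : ℝ)| ≤ 1 := by rw [abs_of_nonneg hG0]; exact hG
      linarith
  have : l + 1 = j + 1 + (l - j) := by omega
  rw [this]
  exact prop (l - j)
end

section
/- Let A′₀ and A′₁ be the 4×4 integer matrices A′₀ = [[1,0,0,0],[0,1,0,0],[0,0,2,0],[0,0,-1,1]] and A′₁ = [[1,0,0,0],[0,1,0,0],[1,0,2,0],[-1,0,-1,1]] (written row by row), and let D = [[1,0,0,0],[0,1,-1,0],[0,0,0,0],[0,0,2,1]]. Then for every integer x and every binary string B = b₁b₂⋯bₘ ∈ {0,1}ᵐ, one has D · A′_{bₘ}·A′_{bₘ₋₁}⋯A′_{b₁} · (1, x, 0, -x)ᵀ = (1, x − val(B), 0, val(B) − x)ᵀ; moreover, before applying D, the product A′_{bₘ}⋯A′_{b₁}·(1, x, 0, -x)ᵀ equals (1, x, val(B), -x − val(B))ᵀ. -/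
open Matrix

/-- The two affine operators encoding a picked number `Bᵢ`. -/
def encB : Fin 2 → Matrix (Fin 4) (Fin 4) ℤ :=
  ![!![1, 0, 0, 0; 0, 1, 0, 0; 0, 0, 2, 0; 0, 0, -1, 1],
    !![1, 0, 0, 0; 0, 1, 0, 0; 1, 0, 2, 0; -1, 0, -1, 1]]

/-- The subtraction operator `D`. -/
def subD : Matrix (Fin 4) (Fin 4) ℤ :=
  !![1, 0, 0, 0; 0, 1, -1, 0; 0, 0, 0, 0; 0, 0, 2, 1]

/-- The numeric value of a binary string (first symbol is the most significant bit). -/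
def binVal (w : List (Fin 2)) : ℤ := w.foldl (fun acc b => 2 * acc + (b : ℕ)) 0

theorem encode_and_subtract_B (x : ℤ) (B : List (Fin 2)) :
    subD.mulVec (B.foldl (fun v b => (encB b).mulVec v) ![1, x, 0, -x])
      = ![1, x - binVal B, 0, binVal B - x] ∧
    B.foldl (fun v b => (encB b).mulVec v) ![1, x, 0, -x]
      = ![1, x, binVal B, -x - binVal B] := by
  have key : ∀ (B : List (Fin 2)) (c : ℤ),
      B.foldl (fun v b => (encB b).mulVec v) ![1, x, c, -x - c]
        = ![1, x, B.foldl (fun (acc : ℤ) (b : Fin 2) => 2 * acc + (b.val : ℤ)) c,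
            -x - B.foldl (fun (acc : ℤ) (b : Fin 2) => 2 * acc + (b.val : ℤ)) c] := by
    intro B
    induction B with
    | nil => intro c; rfl
    | cons b t ih =>
      intro c
      have hstep : (encB b).mulVec ![1, x, c, -x - c]
          = ![1, x, 2 * c + (b.val : ℤ), -x - (2 * c + (b.val : ℤ))] := by
        fin_cases b <;>
          · funext i
            fin_cases i <;> simp [encB, mulVec, dotProduct, Fin.sum_univ_four] <;> ring
      simp only [List.foldl_cons, hstep, ih]
  have h2' : B.foldl (fun v b => (encB b).mulVec v) ![1, x, 0, -x]
      = ![1, x, binVal B, -x - binVal B] := by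
    have h0 : (![1, x, 0, -x] : Fin 4 → ℤ) = ![1, x, 0, -x - 0] := by norm_num
    rw [h0, key B 0]
    simp [binVal, List.foldl_map, ← List.map_eq_flatMap]
  refine ⟨?_, h2'⟩
  rw [h2']
  funext i
  fin_cases i <;> simp [subD, mulVec, dotProduct, Fin.sum_univ_four] <;> ring
end

section
/- Let k ∈ ℕ, let S, B₁, …, B_k be integers, let I ⊆ {1,…,k}, and let t be a positive integer. Define 4-dimensional integer vectors u₀ = (1, S, 0, -S)ᵀ and, for 1 ≤ i ≤ k, u_i = u_{i-1} if i ∉ I, and u_i = (1, x − B_i, 0, B_i − x)ᵀ where u_{i-1} = (1, x, 0, -x)ᵀ, if i ∈ I. Let E(t) be the 4×4 matrix [[1,0,0,0],[0,t,0,0],[0,1-t,1,1-t],[0,0,0,t]] (written row by row), and let S_I = ∑_{i∈I} B_i. Then: u_k = (1, S − S_I, 0, S_I − S)ᵀ; E(t)·u_k = (1, t(S − S_I), 0, t(S_I − S))ᵀ; the weight |first entry|/ℓ₁-norm of E(t)·u_k equals 1/(1 + 2t·|S − S_I|); this weight equals 1 if S = S_I, and is at most 1/(2t + 1) if S ≠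 S_I. -/
/-!
Every `uᵢ` has the shape `(1, x, 0, -x)ᵀ`, with `x` the target `S` minus the `B`s chosen so far,
and `E(t)` preserves this shape while scaling `x` by `t`. The `ℓ₁`-norm of `(1, x, 0, -x)ᵀ` is
`1 + 2|x|`, and `|x| ≥ 1` as soon as the integer `x` is nonzero.
-/

open Matrix Finset

/-- The error-reduction operator `E(t)`. -/
def opE (t : ℤ) : Matrix (Fin 4) (Fin 4) ℤ :=
  !![1, 0, 0, 0; 0, t, 0, 0; 0, 1 - t, 1, 1 - t; 0, 0, 0, t]

theorem Finset.sum_filter_val_lt_succ {M : Type*} [AddCommMonoid M] {k : ℕ}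
    (I : Finset (Fin k)) (f : Fin k → M) (i : Fin k) :
    ∑ j ∈ I with j.val < i.val + 1, f j
      = (∑ j ∈ I with j.val < i.val, f j) + if i ∈ I then f i else 0 := by
  have hsplit : I.filter (fun j : Fin k => j.val < i.val + 1)
      = I.filter fun j => j.val < i.val ∨ j = i :=
    filter_congr fun j _ => by rw [Fin.ext_iff]; omega
  have hdisj : Disjoint (I.filter fun j : Fin k => j.val < i.val) (I.filter fun j => j = i) := by
    rw [disjoint_filter]; rintro j - hj rfl; exact lt_irrefl _ hj
  rw [hsplit, filter_or, sum_union hdisj, filter_eq']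
  split_ifs <;> simp

def residualVec (x : ℤ) : Fin 4 → ℤ := ![1, x, 0, -x]

noncomputable def firstWeight {n : ℕ} (v : Fin (n + 1) → ℤ) : ℝ :=
  (|v 0| : ℝ) / ((∑ j, |v j| : ℤ) : ℝ)

theorem residualVec_step (x b : ℤ) :
    ![1, residualVec x 1 - b, 0, b - residualVec x 1] = residualVec (x - b) := by
  simp [residualVec]

theorem opE_mulVec_residualVec (t x : ℤ) : opE t *ᵥ residualVec x = residualVec (t * x) := by
  ext j
  fin_cases j <;> simp [opE, residualVec, mulVec, dotProduct, Fin.sum_univ_four]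

theorem sum_abs_residualVec (x : ℤ) : ∑ j, |residualVec x j| = 1 + 2 * |x| := by
  simp only [residualVec, Fin.sum_univ_four, Fin.isValue, cons_val_zero, abs_one, cons_val_one,
    Matrix.cons_val, abs_zero, add_zero, abs_neg]
  ring

theorem firstWeight_residualVec (x : ℤ) :
    firstWeight (residualVec x) = 1 / (1 + 2 * |(x : ℝ)|) := by
  rw [firstWeight, sum_abs_residualVec]
  simp [residualVec]

theorem eq_residualVec_of_recursion {k : ℕ} {S : ℤ} {B : Fin k → ℤ} {I : Finset (Fin k)}
    {u : ℕ → Fin 4 → ℤ} (hu0 : u 0 = residualVec S)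
    (hu : ∀ i : Fin k,
      u (i + 1) = if i ∈ I then ![1, u i 1 - B i, 0, B i - u i 1] else u i) :
    ∀ n ≤ k, u n = residualVec (S - ∑ i ∈ I with i.val < n, B i)
  | 0, _ => by simpa using hu0
  | n + 1, hn => by
    have ih := eq_residualVec_of_recursion hu0 hu n (by omega)
    have hstep := hu ⟨n, hn⟩
    rw [sum_filter_val_lt_succ I B ⟨n, hn⟩, hstep, ih]
    split_ifs
    · rw [residualVec_step, sub_add_eq_sub_sub]
    · rw [add_zero]

theorem subsetsum_verification (k : ℕ) (S : ℤ) (B : Fin k → ℤ) (I : Finset (Fin k))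
    (t : ℤ) (ht : 0 < t) (u : ℕ → Fin 4 → ℤ)
    (hu0 : u 0 = ![1, S, 0, -S])
    (hu : ∀ i : Fin k,
      u (i + 1) = if i ∈ I then ![1, u i 1 - B i, 0, B i - u i 1] else u i) :
    u k = ![1, S - ∑ i ∈ I, B i, 0, (∑ i ∈ I, B i) - S] ∧
    (opE t).mulVec (u k)
      = ![1, t * (S - ∑ i ∈ I, B i), 0, t * ((∑ i ∈ I, B i) - S)] ∧
    ((|((opE t).mulVec (u k)) 0| : ℝ) / ((∑ j : Fin 4, |((opE t).mulVec (u k)) j| : ℤ) : ℝ)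
      = 1 / (1 + 2 * (t : ℝ) * ((|S - ∑ i ∈ I, B i| : ℤ) : ℝ))) ∧
    (S = ∑ i ∈ I, B i →
      (|((opE t).mulVec (u k)) 0| : ℝ) / ((∑ j : Fin 4, |((opE t).mulVec (u k)) j| : ℤ) : ℝ)
        = 1) ∧
    (S ≠ ∑ i ∈ I, B i →
      (|((opE t).mulVec (u k)) 0| : ℝ) / ((∑ j : Fin 4, |((opE t).mulVec (u k)) j| : ℤ) : ℝ)
        ≤ 1 / (2 * (t : ℝ) + 1)) := by
  set D := S - ∑ i ∈ I, B i
  have huk : u k = residualVec D := by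
    have hfull : I.filter (fun i : Fin k => i.val < k) = I := filter_true_of_mem fun i _ => i.isLt
    simpa only [hfull] using eq_residualVec_of_recursion hu0 hu k le_rfl
  have hEuk : opE t *ᵥ u k = residualVec (t * D) := by rw [huk, opE_mulVec_residualVec]
  have hweight : firstWeight (opE t *ᵥ u k) = 1 / (1 + 2 * (t : ℝ) * ((|D| : ℤ) : ℝ)) := by
    rw [hEuk, firstWeight_residualVec]
    push_cast
    rw [abs_mul, abs_of_pos (by exact_mod_cast ht : (0 : ℝ) < t), mul_assoc]
  refine ⟨by rw [huk, residualVec, neg_sub], by rw [hEuk, residualVec, ← mul_neg, neg_sub],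
    hweight, fun hS => ?_, fun hS => ?_⟩
  · change firstWeight _ = 1
    rw [hweight, show D = 0 from sub_eq_zero.mpr hS]
    simp
  · have hD1 : (1 : ℝ) ≤ ((|D| : ℤ) : ℝ) := by
      exact_mod_cast Int.one_le_abs (sub_ne_zero.mpr hS)
    have ht1 : (1 : ℝ) ≤ t := by exact_mod_cast ht
    change firstWeight _ ≤ _
    rw [hweight]
    exact one_div_le_one_div_of_le (by positivity) (by nlinarith)
end
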